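/- In type C_n (n ≥ 3), where the simple roots are α_i = −ω_{i−1} + 2ω_i − ω_{i+1} for 1 ≤ i ≤ n−1 and α_n = −2ω_{n−1} + 2ω_n, the level sets satisfy: Λ₁ = {0, ω_1}, Λ₂ = {ω_2, ω_3}, and the set of radical weights lying in Λ₃ equals {2ω_1} if n = 3 and {2ω_1, ω_4} if n ≥ 4. -/

import Mathlib

/-!
The coefficients of a weight in the simple roots are read off by the functionals `rootCoord n t`,
so `μ ≺ λ` becomes `rootCoord n t μ ≤ rootCoord n t λ` for all `t` plus a parity condition on
`rootCoord n n`, and `λ` is radical iff `rootCoord n n λ` is even. For dominant `λ`,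
`min(t, rootCoord n n λ) ≤ rootCoord n t λ`, so `ω_j ≺ λ` as soon as `ω_j ≠ λ` and
`j ≤ rootCoord n n λ` with the same parity; conversely every dominant weight below `ω_j` or `2ω_1`
has coordinate sum `rootCoord n 1 ≤ 1`, hence is `0` or a fundamental weight. A parity case
analysis then identifies `Λ₁ ∪ Λ₂` with the dominant weights with `rootCoord n 1 ≤ 1` and
`rootCoord n n ≤ 3`, and the radical weights of `Λ₃` follow.
-/

namespace WeightLevelsCn

/-- The simple roots of `C_n` written in the basis of fundamental dominant weights:
`α_i = -ω_{i-1} + 2ω_i - ω_{i+1}` for `i ≤ n-1` and `α_n = -2ω_{n-1} + 2ω_n`,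
with `0`-based indexing. -/
def alpha (n : ℕ) (i : Fin n) : Fin n → ℤ := fun j =>
  if j = i then 2
  else if (i : ℕ) = n - 1 ∧ (j : ℕ) + 1 = (i : ℕ) then -2
  else if (j : ℕ) + 1 = (i : ℕ) ∨ (i : ℕ) + 1 = (j : ℕ) then -1
  else 0

/-- A weight is dominant if all its coordinates (in the fundamental weight basis) are `≥ 0`. -/
def dominant (n : ℕ) (l : Fin n → ℤ) : Prop := ∀ i, 0 ≤ l i

/-- `prec n μ λ` means `μ ≺ λ`: `μ ≠ λ` and `λ - μ` is an `ℕ`-linear combination of the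
simple roots. -/
def prec (n : ℕ) (μ l : Fin n → ℤ) : Prop :=
  μ ≠ l ∧ ∃ c : Fin n → ℕ, l = μ + ∑ i, (c i : ℤ) • alpha n i

/-- A weight is radical if it is a `ℤ`-linear combination of the simple roots. -/
def radical (n : ℕ) (l : Fin n → ℤ) : Prop :=
  ∃ c : Fin n → ℤ, l = ∑ i, c i • alpha n i

/-- `cum n i` is the union `Λ₁ ∪ ⋯ ∪ Λ_i` of the first `i` level sets. -/
def cum (n : ℕ) : ℕ → Set (Fin n → ℤ)
  | 0 => ∅
  | i + 1 => cum n i ∪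
      {l | dominant n l ∧ l ∉ cum n i ∧ ∀ ν, dominant n ν → prec n ν l → ν ∈ cum n i}

/-- `level n i` is the set `Λ_i` of weights of level `i` (for `i ≥ 1`). -/
def level (n : ℕ) (i : ℕ) : Set (Fin n → ℤ) :=
  {l | dominant n l ∧ l ∉ cum n (i - 1) ∧ ∀ ν, dominant n ν → prec n ν l → ν ∈ cum n (i - 1)}

open Finset

lemma sum_ite_val_eq {M : Type*} [AddCommMonoid M] (n m : ℕ) (a : M) :
    ∑ k : Fin n, (if (k : ℕ) = m then a else 0) = if m < n then a else 0 := by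
  split_ifs with h
  · rw [sum_eq_single ⟨m, h⟩ (fun k _ hk => if_neg fun hk' => hk (Fin.ext hk')) (by simp)]
    simp
  · exact sum_eq_zero fun k _ => if_neg (by omega)

/-- For `1 ≤ t < n`, `rootCoord n t d` is the coefficient of `α_t` in `d` written in the simple
roots, and `rootCoord n n d` is twice the coefficient of `α_n` (see `eq_sum_smul_alpha`). -/
def rootCoord (n t : ℕ) : (Fin n → ℤ) →+ ℤ where
  toFun d := ∑ k : Fin n, (min t (k + 1) : ℕ) * d k
  map_zero' := by simp
  map_add' d e := by simp [mul_add, sum_add_distrib]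

section

variable {n : ℕ}

lemma rootCoord_apply (t : ℕ) (d : Fin n → ℤ) :
    rootCoord n t d = ∑ k : Fin n, (min t (k + 1) : ℕ) * d k := rfl

@[simp] lemma rootCoord_zero_left (d : Fin n → ℤ) : rootCoord n 0 d = 0 := by
  simp [rootCoord_apply]

lemma rootCoord_single (t : ℕ) (j : Fin n) (a : ℤ) :
    rootCoord n t (Pi.single j a) = (min t (j + 1) : ℕ) * a := by
  simp [rootCoord_apply, Pi.single_apply]

lemma rootCoord_of_le {t : ℕ} (h : n ≤ t) (d : Fin n → ℤ) :
    rootCoord n t d = rootCoord n n d := by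
  simp only [rootCoord_apply]
  refine sum_congr rfl fun k _ => ?_
  rw [min_eq_right (by omega), min_eq_right (by omega)]

lemma rootCoord_one (d : Fin n → ℤ) : rootCoord n 1 d = ∑ k, d k := by
  simp [rootCoord_apply]

lemma apply_eq_rootCoord (d : Fin n → ℤ) (k : Fin n) :
    d k = 2 * rootCoord n (k + 1) d - rootCoord n k d - rootCoord n (k + 2) d := by
  have hcoef : ∀ m : Fin n, 2 * ((min (k + 1) (m + 1) : ℕ) : ℤ) - (min k (m + 1) : ℕ)
      - (min (k + 2) (m + 1) : ℕ) = if m = k then 1 else 0 := by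
    intro m
    split_ifs with h
    · subst h; omega
    · have : (m : ℕ) ≠ k := Fin.val_ne_of_ne h
      omega
  calc d k = ∑ m, (if m = k then (1 : ℤ) else 0) * d m := by simp
    _ = _ := by
      simp only [← hcoef, rootCoord_apply, mul_sum, ← sum_sub_distrib]
      exact sum_congr rfl fun m _ => by ring

lemma eq_of_rootCoord_eq {d e : Fin n → ℤ} (h : ∀ t, rootCoord n t d = rootCoord n t e) :
    d = e :=
  funext fun k => by rw [apply_eq_rootCoord d k, apply_eq_rootCoord e k, h, h, h]

lemma rootCoord_eq_zero_or_succ (t : ℕ) :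
    rootCoord n t = 0 ∨ ∃ j : Fin n, rootCoord n t = rootCoord n (j + 1) := by
  rcases t with _ | t
  · exact Or.inl (AddMonoidHom.ext rootCoord_zero_left)
  by_cases ht : t < n
  · exact Or.inr ⟨⟨t, ht⟩, rfl⟩
  rcases Nat.eq_zero_or_pos n with rfl | hn
  · exact Or.inl (AddMonoidHom.ext fun d => by simp [rootCoord_apply])
  refine Or.inr ⟨⟨n - 1, by omega⟩, AddMonoidHom.ext fun d => ?_⟩
  rw [rootCoord_of_le (by omega), rootCoord_of_le (n := n) (t := n - 1 + 1) (by omega)]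

lemma rootCoord_succ_alpha (i j : Fin n) :
    rootCoord n (j + 1) (alpha n i) = if i = j then (if (j : ℕ) + 1 = n then 2 else 1) else 0 := by
  have hterm : ∀ k : Fin n, ((min (j + 1) (k + 1) : ℕ) : ℤ) * alpha n i k =
      (if (k : ℕ) = i then 2 * ((min (j + 1) (i + 1) : ℕ) : ℤ) else 0)
      - (if (k : ℕ) = i - 1 then (if (i : ℕ) + 1 = n then 2 else 1) * ((min (j + 1) i : ℕ) : ℤ)
          else 0)
      - (if (k : ℕ) = i + 1 then ((min (j + 1) (i + 2) : ℕ) : ℤ) else 0) := by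
    intro k
    simp only [alpha, Fin.ext_iff]
    split_ifs <;> omega
  rw [rootCoord_apply, sum_congr rfl fun k _ => hterm k, sum_sub_distrib, sum_sub_distrib,
    sum_ite_val_eq, sum_ite_val_eq, sum_ite_val_eq]
  simp only [Fin.ext_iff]
  have := i.isLt
  have := j.isLt
  split_ifs <;> omega

lemma rootCoord_succ_sum_smul_alpha (c : Fin n → ℤ) (j : Fin n) :
    rootCoord n (j + 1) (∑ i, c i • alpha n i) = (if (j : ℕ) + 1 = n then 2 else 1) * c j := by
  simp only [map_sum, map_zsmul, rootCoord_succ_alpha, smul_eq_mul, mul_ite, mul_zero,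
    sum_ite_eq', mem_univ, if_true]
  split_ifs <;> ring

lemma rootCoord_alpha_nonneg (t : ℕ) (i : Fin n) : 0 ≤ rootCoord n t (alpha n i) := by
  rcases rootCoord_eq_zero_or_succ (n := n) t with h | ⟨j, h⟩
  · simp [h]
  · rw [h, rootCoord_succ_alpha]
    split_ifs <;> norm_num

lemma two_dvd_rootCoord_self_alpha (i : Fin n) : 2 ∣ rootCoord n n (alpha n i) := by
  obtain ⟨m, rfl⟩ : ∃ m, n = m + 1 := ⟨n - 1, by have := i.isLt; omega⟩
  have h := rootCoord_succ_alpha i (Fin.last m)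
  rw [Fin.val_last] at h
  rw [h]
  split_ifs <;> simp_all

lemma two_dvd_rootCoord_self_sum_smul_alpha (c : Fin n → ℤ) :
    2 ∣ rootCoord n n (∑ i, c i • alpha n i) := by
  simp only [map_sum, map_zsmul, smul_eq_mul]
  exact dvd_sum fun i _ => dvd_mul_of_dvd_right (two_dvd_rootCoord_self_alpha i) _

lemma eq_sum_smul_alpha {d : Fin n → ℤ} (h : 2 ∣ rootCoord n n d) :
    d = ∑ j : Fin n,
      (if (j : ℕ) + 1 = n then rootCoord n n d / 2 else rootCoord n (j + 1) d) • alpha n j := by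
  refine eq_of_rootCoord_eq fun t => ?_
  rcases rootCoord_eq_zero_or_succ (n := n) t with ht | ⟨j, ht⟩
  · simp [ht]
  rw [ht, rootCoord_succ_sum_smul_alpha]
  split_ifs with hj
  · rw [hj, Int.mul_ediv_cancel' h]
  · rw [one_mul]

lemma exists_nat_sum_smul_alpha_iff (d : Fin n → ℤ) :
    (∃ c : Fin n → ℕ, d = ∑ i, (c i : ℤ) • alpha n i) ↔
      (∀ t, 0 ≤ rootCoord n t d) ∧ 2 ∣ rootCoord n n d := by
  constructor
  · rintro ⟨c, rfl⟩
    refine ⟨fun t => ?_, two_dvd_rootCoord_self_sum_smul_alpha _⟩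
    simp only [map_sum, map_zsmul, smul_eq_mul]
    exact sum_nonneg fun i _ => mul_nonneg (by positivity) (rootCoord_alpha_nonneg t i)
  · rintro ⟨hnonneg, hdvd⟩
    refine ⟨fun j => (if (j : ℕ) + 1 = n then rootCoord n n d / 2 else rootCoord n (j + 1) d).toNat,
      (eq_sum_smul_alpha hdvd).trans (sum_congr rfl fun j _ => ?_)⟩
    rw [Int.toNat_of_nonneg]
    split_ifs
    · exact Int.ediv_nonneg (hnonneg n) (by norm_num)
    · exact hnonneg _

lemma radical_iff (d : Fin n → ℤ) : radical n d ↔ 2 ∣ rootCoord n n d := by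
  refine ⟨fun ⟨c, hc⟩ => ?_, fun h => ⟨_, eq_sum_smul_alpha h⟩⟩
  rw [hc]
  exact two_dvd_rootCoord_self_sum_smul_alpha c

lemma prec_iff (μ l : Fin n → ℤ) :
    prec n μ l ↔ μ ≠ l ∧ (∀ t, rootCoord n t μ ≤ rootCoord n t l) ∧
      2 ∣ rootCoord n n l - rootCoord n n μ := by
  simp only [prec, ← sub_eq_iff_eq_add', exists_nat_sum_smul_alpha_iff, map_sub, sub_nonneg]

variable {d : Fin n → ℤ}

lemma rootCoord_nonneg (hd : dominant n d) (t : ℕ) : 0 ≤ rootCoord n t d := by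
  rw [rootCoord_apply]
  exact sum_nonneg fun k _ => mul_nonneg (Nat.cast_nonneg _) (hd k)

lemma rootCoord_mono (hd : dominant n d) {t t' : ℕ} (h : t ≤ t') :
    rootCoord n t d ≤ rootCoord n t' d := by
  rw [rootCoord_apply, rootCoord_apply]
  exact sum_le_sum fun k _ => mul_le_mul_of_nonneg_right (by gcongr) (hd k)

lemma rootCoord_le_rootCoord_self (hd : dominant n d) (t : ℕ) :
    rootCoord n t d ≤ rootCoord n n d := by
  rcases le_total t n with h | h
  · exact rootCoord_mono hd h
  · exact (rootCoord_of_le h d).le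

lemma eq_zero_of_rootCoord_self_nonpos (hd : dominant n d) (h : rootCoord n n d ≤ 0) : d = 0 :=
  eq_of_rootCoord_eq fun t => by
    have := rootCoord_nonneg hd t
    have := rootCoord_le_rootCoord_self hd t
    simp only [map_zero]
    omega

lemma min_le_rootCoord (hd : dominant n d) (t : ℕ) :
    min (t : ℤ) (rootCoord n n d) ≤ rootCoord n t d := by
  by_cases h : ∃ k : Fin n, d k ≠ 0 ∧ t ≤ (k : ℕ) + 1
  · obtain ⟨k, hk, htk⟩ := h
    calc min (t : ℤ) (rootCoord n n d) ≤ ((min t ((k : ℕ) + 1) : ℕ) : ℤ) * 1 := by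
          rw [min_eq_left htk]; simp
      _ ≤ (min t ((k : ℕ) + 1) : ℕ) * d k := by gcongr; have := hd k; omega
      _ ≤ rootCoord n t d :=
          single_le_sum (f := fun k : Fin n => ((min t ((k : ℕ) + 1) : ℕ) : ℤ) * d k)
            (fun k _ => mul_nonneg (Nat.cast_nonneg _) (hd k)) (mem_univ k)
  · push Not at h
    rw [rootCoord_apply, rootCoord_apply]
    refine (min_le_right _ _).trans (le_of_eq (sum_congr rfl fun k _ => ?_))
    by_cases hk : d k = 0
    · simp [hk]
    · have := h k hk
      have := k.isLt
      rw [min_eq_right (by omega), min_eq_right (by omega)]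

lemma eq_zero_or_eq_single_of_rootCoord_one_le_one (hd : dominant n d)
    (h : rootCoord n 1 d ≤ 1) : d = 0 ∨ ∃ m, d = Pi.single m 1 := by
  rw [rootCoord_one] at h
  have hle : ∀ s : Finset (Fin n), ∑ k ∈ s, d k ≤ 1 := fun s =>
    (sum_le_sum_of_subset_of_nonneg (subset_univ s) fun k _ _ => hd k).trans h
  by_cases hz : d = 0
  · exact Or.inl hz
  obtain ⟨m, hm⟩ := Function.ne_iff.mp hz
  have hm1 : d m = 1 := by
    have := hle {m}
    have := hd m
    simp_all only [sum_singleton, Pi.zero_apply]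
    omega
  refine Or.inr ⟨m, funext fun k => ?_⟩
  rcases eq_or_ne k m with rfl | hkm
  · simp [hm1]
  · have hpair := hle {k, m}
    have := hd k
    rw [sum_pair hkm] at hpair
    simp only [Pi.single_apply, hkm, if_false]
    omega

lemma rootCoord_self_single (j : Fin n) (a : ℤ) :
    rootCoord n n (Pi.single j a) = ((j : ℤ) + 1) * a := by
  rw [rootCoord_single, min_eq_right (by omega)]
  push_cast
  ring

variable {l : Fin n → ℤ}

lemma dominant_single (j : Fin n) {a : ℤ} (ha : 0 ≤ a) : dominant n (Pi.single j a) := fun k => by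
  rw [Pi.single_apply]
  split_ifs
  exacts [ha, le_rfl]

lemma rootCoord_le_of_prec {ν : Fin n → ℤ} (h : prec n ν l) (t : ℕ) :
    rootCoord n t ν ≤ rootCoord n t l :=
  ((prec_iff ν l).1 h).2.1 t

lemma zero_prec (hl : dominant n l) (hpar : 2 ∣ rootCoord n n l) (hne : 0 ≠ l) : prec n 0 l :=
  (prec_iff 0 l).2 ⟨hne, fun t => by simpa using rootCoord_nonneg hl t, by simpa using hpar⟩

lemma single_prec (hl : dominant n l) {j : ℕ} (hj : j < n) (hjl : (j : ℤ) + 1 ≤ rootCoord n n l)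
    (hpar : 2 ∣ rootCoord n n l - (j + 1)) (hne : Pi.single ⟨j, hj⟩ 1 ≠ l) :
    prec n (Pi.single ⟨j, hj⟩ 1) l := by
  refine (prec_iff _ l).2 ⟨hne, fun t => ?_, by rwa [rootCoord_self_single, mul_one]⟩
  have := min_le_rootCoord hl t
  rw [rootCoord_single]
  push_cast
  omega

lemma eq_zero_or_eq_single_of_prec {ν : Fin n → ℤ} (hν : dominant n ν) (h : prec n ν l)
    (h1 : rootCoord n 1 ν ≤ 1) :
    (ν = 0 ∧ 2 ∣ rootCoord n n l) ∨ ∃ m : Fin n, ν = Pi.single m 1 ∧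
      (m : ℤ) + 1 ≤ rootCoord n n l ∧ 2 ∣ rootCoord n n l - (m + 1) := by
  obtain ⟨-, hle, hpar⟩ := (prec_iff ν l).1 h
  rcases eq_zero_or_eq_single_of_rootCoord_one_le_one hν h1 with rfl | ⟨m, rfl⟩
  · exact Or.inl ⟨rfl, by simpa using hpar⟩
  · have := hle n
    rw [rootCoord_self_single, mul_one] at this hpar
    exact Or.inr ⟨m, rfl, this, hpar⟩

lemma eq_zero_or_eq_single_of_prec_single {ν : Fin n → ℤ} (hν : dominant n ν) {j : ℕ} {hj : j < n}
    (h : prec n ν (Pi.single ⟨j, hj⟩ 1)) :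
    (ν = 0 ∧ 2 ∣ (j : ℤ) + 1) ∨ ∃ m : Fin n, ν = Pi.single m 1 ∧ (m : ℕ) < j ∧ 2 ∣ (j : ℤ) - m := by
  have h1 : rootCoord n 1 ν ≤ 1 := by simpa [rootCoord_single] using rootCoord_le_of_prec h 1
  rcases eq_zero_or_eq_single_of_prec hν h h1 with ⟨rfl, hpar⟩ | ⟨m, rfl, hm, hpar⟩
  · exact Or.inl ⟨rfl, by simpa [rootCoord_self_single] using hpar⟩
  · have hmj : (m : ℕ) ≠ j := fun hmj => h.1 (by rw [show m = ⟨j, hj⟩ from Fin.ext hmj])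
    rw [rootCoord_self_single, mul_one] at hm hpar
    exact Or.inr ⟨m, rfl, by simp at hm; omega, by simpa using hpar⟩

lemma mem_level_succ_iff {i : ℕ} :
    l ∈ level n (i + 1) ↔
      dominant n l ∧ l ∉ cum n i ∧ ∀ ν, dominant n ν → prec n ν l → ν ∈ cum n i :=
  Iff.rfl

lemma cum_succ (i : ℕ) : cum n (i + 1) = cum n i ∪ level n (i + 1) := rfl

lemma level_one (hn : 0 < n) : level n 1 = {0, Pi.single ⟨0, hn⟩ 1} := by
  ext l
  simp only [mem_level_succ_iff, cum, Set.mem_empty_iff_false, not_false_eq_true, true_and,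
    imp_false, Set.mem_insert_iff, Set.mem_singleton_iff]
  constructor
  · rintro ⟨hl, hmin⟩
    by_contra! hne
    have := rootCoord_nonneg hl n
    rcases Int.emod_two_eq_zero_or_one (rootCoord n n l) with hpar | hpar
    · exact hmin 0 (fun _ => le_rfl) (zero_prec hl (by omega) (Ne.symm hne.1))
    · exact hmin _ (dominant_single _ zero_le_one)
        (single_prec hl hn (by omega) (by omega) (Ne.symm hne.2))
  · rintro (rfl | rfl)
    · refine ⟨fun _ => le_rfl, fun ν hν hprec => hprec.1 (eq_zero_of_rootCoord_self_nonpos hν ?_)⟩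
      simpa using rootCoord_le_of_prec hprec n
    · refine ⟨dominant_single _ zero_le_one, fun ν hν hprec => ?_⟩
      rcases eq_zero_or_eq_single_of_prec_single hν hprec with ⟨-, hpar⟩ | ⟨m, -, hm, -⟩
      · simp at hpar
      · simp at hm

lemma mem_cum_one_iff (hn : 0 < n) : l ∈ cum n 1 ↔ dominant n l ∧ rootCoord n n l ≤ 1 := by
  rw [cum_succ, level_one hn, show cum n 0 = ∅ from rfl, Set.empty_union]
  constructor
  · rintro (rfl | rfl)
    · exact ⟨fun _ => le_rfl, by simp⟩
    · exact ⟨dominant_single _ zero_le_one, by simp [rootCoord_self_single]⟩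
  · rintro ⟨hl, hN⟩
    have h1 := (rootCoord_mono hl (by omega : 1 ≤ n)).trans hN
    rcases eq_zero_or_eq_single_of_rootCoord_one_le_one hl h1 with rfl | ⟨m, rfl⟩
    · exact Or.inl rfl
    · rw [rootCoord_self_single, mul_one] at hN
      exact Or.inr (by rw [show m = ⟨0, hn⟩ from Fin.ext (by simp; omega)]; rfl)

lemma level_two (hn : 3 ≤ n) :
    level n 2 = {Pi.single ⟨1, lt_of_lt_of_le (by norm_num) hn⟩ 1,
      Pi.single ⟨2, lt_of_lt_of_le (by norm_num) hn⟩ 1} := by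
  ext l
  simp only [mem_level_succ_iff, mem_cum_one_iff (by omega : 0 < n), Set.mem_insert_iff,
    Set.mem_singleton_iff]
  constructor
  · rintro ⟨hl, hN, hmin⟩
    simp only [hl, true_and, not_le] at hN
    by_contra! hne
    rcases Int.emod_two_eq_zero_or_one (rootCoord n n l) with hpar | hpar
    · have := hmin _ (dominant_single _ zero_le_one)
        (single_prec hl (by omega) (by omega) (by omega) (Ne.symm hne.1))
      simp [rootCoord_self_single] at this
    · have := hmin _ (dominant_single _ zero_le_one)
        (single_prec hl (by omega) (by omega) (by omega) (Ne.symm hne.2))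
      simp [rootCoord_self_single] at this
  · rintro (rfl | rfl) <;> refine ⟨dominant_single _ zero_le_one, by simp [rootCoord_self_single],
      fun ν hν hprec => ⟨hν, ?_⟩⟩ <;>
    rcases eq_zero_or_eq_single_of_prec_single hν hprec with ⟨rfl, hpar⟩ | ⟨m, rfl, hm, hpar⟩
    all_goals simp only [map_zero, rootCoord_self_single]; omega

lemma mem_cum_two_iff (hn : 3 ≤ n) :
    l ∈ cum n 2 ↔ dominant n l ∧ rootCoord n 1 l ≤ 1 ∧ rootCoord n n l ≤ 3 := by
  rw [cum_succ, level_two hn, Set.mem_union, mem_cum_one_iff (by omega)]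
  constructor
  · rintro (⟨hl, hN⟩ | rfl | rfl)
    · exact ⟨hl, (rootCoord_mono hl (by omega)).trans hN, by omega⟩
    all_goals exact ⟨dominant_single _ zero_le_one, by simp [rootCoord_single]⟩
  · rintro ⟨hl, h1, hN⟩
    by_cases hN1 : rootCoord n n l ≤ 1
    · exact Or.inl ⟨hl, hN1⟩
    rcases eq_zero_or_eq_single_of_rootCoord_one_le_one hl h1 with rfl | ⟨m, rfl⟩
    · simp at hN1
    · rw [rootCoord_self_single, mul_one] at hN hN1
      rcases (show (m : ℕ) = 1 ∨ (m : ℕ) = 2 by omega) with hm | hm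
      · exact Or.inr (Or.inl (by rw [show m = ⟨1, by omega⟩ from Fin.ext hm]))
      · exact Or.inr (Or.inr (by rw [show m = ⟨2, by omega⟩ from Fin.ext hm]; rfl))

lemma single_zero_two_mem_level_three (hn : 3 ≤ n) :
    Pi.single ⟨0, lt_of_lt_of_le (by norm_num) hn⟩ 2 ∈ level n 3 := by
  rw [mem_level_succ_iff, mem_cum_two_iff hn]
  refine ⟨dominant_single _ zero_le_two, by simp [rootCoord_single], fun ν hν hprec => ?_⟩
  have hle := rootCoord_le_of_prec hprec
  rw [mem_cum_two_iff hn]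
  refine ⟨hν, ?_, by have := hle n; simp [rootCoord_self_single] at this; omega⟩
  by_contra! h2
  -- coordinate sum `2` pins every `rootCoord` of `ν` to that of `2ω₁`
  refine hprec.1 (eq_of_rootCoord_eq fun t => ?_)
  rcases t with _ | t
  · simp
  have := hle (t + 1)
  have := rootCoord_mono hν (Nat.le_add_left 1 t)
  simp only [rootCoord_single] at *
  push_cast at *
  omega

lemma single_three_mem_level_three (hn : 4 ≤ n) : Pi.single ⟨3, hn⟩ 1 ∈ level n 3 := by
  rw [mem_level_succ_iff, mem_cum_two_iff (by omega)]
  refine ⟨dominant_single _ zero_le_one, by simp [rootCoord_self_single], fun ν hν hprec => ?_⟩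
  rw [mem_cum_two_iff (by omega)]
  rcases eq_zero_or_eq_single_of_prec_single hν hprec with ⟨rfl, -⟩ | ⟨m, rfl, hm, -⟩
  · simp [hν]
  · exact ⟨hν, by simp [rootCoord_single], by rw [rootCoord_self_single]; omega⟩

lemma eq_of_mem_level_three_of_radical (hn : 3 ≤ n) (hl : l ∈ level n 3) (hr : radical n l) :
    l = Pi.single ⟨0, lt_of_lt_of_le (by norm_num) hn⟩ 2 ∨
      ∃ h : 3 < n, l = Pi.single ⟨3, h⟩ 1 := by
  obtain ⟨hd, hnot, hmin⟩ := mem_level_succ_iff.1 hl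
  rw [radical_iff] at hr
  have hnot_prec : ∀ μ, dominant n μ → μ ∉ cum n 2 → ¬ prec n μ l := fun μ hμ hμ' h =>
    hμ' (hmin μ hμ h)
  by_cases h1 : 2 ≤ rootCoord n 1 l
  · refine Or.inl (by_contra fun hne => hnot_prec _ (dominant_single _ zero_le_two)
      (by simp [mem_cum_two_iff hn, rootCoord_single])
      ((prec_iff _ _).2 ⟨Ne.symm hne, fun t => ?_, by rw [rootCoord_self_single]; omega⟩))
    rcases t with _ | t
    · simp
    have := rootCoord_mono hd (Nat.le_add_left 1 t)
    rw [rootCoord_single]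
    push_cast
    omega
  rcases eq_zero_or_eq_single_of_rootCoord_one_le_one hd (by omega) with rfl | ⟨m, rfl⟩
  · exact absurd ((mem_cum_two_iff hn).2 (by simp [hd])) hnot
  rw [rootCoord_self_single, mul_one] at hr
  have hm : 3 ≤ (m : ℕ) := by
    by_contra!
    exact hnot ((mem_cum_two_iff hn).2
      ⟨hd, by simp [rootCoord_single], by rw [rootCoord_self_single]; omega⟩)
  refine Or.inr ⟨by omega, by_contra fun hne => hnot_prec _ (dominant_single _ zero_le_one)
    (by simp [mem_cum_two_iff hn, rootCoord_self_single])
    (single_prec hd (by omega) ?_ ?_ (Ne.symm hne))⟩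
  all_goals rw [rootCoord_self_single]; omega

lemma mem_level_three_and_radical_iff (hn : 3 ≤ n) :
    l ∈ level n 3 ∧ radical n l ↔
      l = Pi.single ⟨0, lt_of_lt_of_le (by norm_num) hn⟩ 2 ∨
        ∃ h : 3 < n, l = Pi.single ⟨3, h⟩ 1 := by
  refine ⟨fun ⟨hl, hr⟩ => eq_of_mem_level_three_of_radical hn hl hr, ?_⟩
  rintro (rfl | ⟨h, rfl⟩)
  · exact ⟨single_zero_two_mem_level_three hn, (radical_iff _).2 (by simp [rootCoord_self_single])⟩
  · exact ⟨single_three_mem_level_three h, (radical_iff _).2 (by simp [rootCoord_self_single])⟩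

end

/-- **Lemma 5.2, row `C_n` (`n > 2`), and Lemma 5.2(2),(3).** In type `C_n` (`n ≥ 3`):
`Λ₁ = {0, ω_1}`, `Λ₂ = {ω_2, ω_3}`, and the set of radical weights in `Λ₃` is `{2ω_1}`
for `n = 3` and `{2ω_1, ω_4}` for `n ≥ 4`. -/
theorem levels_Cn (n : ℕ) (hn : 3 ≤ n) :
    level n 1 = {0, Pi.single (⟨0, by omega⟩ : Fin n) (1 : ℤ)} ∧
    level n 2 =
      {Pi.single (⟨1, by omega⟩ : Fin n) (1 : ℤ),
       Pi.single (⟨2, by omega⟩ : Fin n) (1 : ℤ)} ∧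
    (n = 3 →
      {l | l ∈ level n 3 ∧ radical n l} = {Pi.single (⟨0, by omega⟩ : Fin n) (2 : ℤ)}) ∧
    (∀ h4 : 4 ≤ n,
      {l | l ∈ level n 3 ∧ radical n l} =
        {Pi.single (⟨0, by omega⟩ : Fin n) (2 : ℤ),
         Pi.single (⟨3, by omega⟩ : Fin n) (1 : ℤ)}) := by
  refine ⟨level_one (by omega), level_two hn, fun h3 => ?_, fun h4 => ?_⟩ <;> ext l <;>
    simp only [Set.mem_ofPred_eq, mem_level_three_and_radical_iff hn, Set.mem_insert_iff,
      Set.mem_singleton_iff]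
  · simp [h3]
  · simp [show 3 < n by omega]

end WeightLevelsCn
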